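/- arXiv:2309.07573 — 6 statements merged into one kernel-verified Lean document; each statement's English description precedes it below -/
import Mathlib

section
/- Let $X$ be a separable infinite-dimensional Banach space over $\mathbb{K}$ ($\mathbb{K} = \mathbb{R}$ or $\mathbb{C}$), let $(e_k, e_k^*)_{k \in \mathbb{N}} \subseteq X \times X^*$ be a bounded biorthogonal sequence with dense span, and let $T : X \to X$ be a continuous linear operator which is upper-triangular with respect to $(e_k, e_k^*)_{k\in\mathbb{N}}$, with diagonal $\lambda_k := \langle e_k^*, T e_k \rangle$. If $\lambda_k \neq \lambda_l$ whenever $k \neq l$, then the linear span of $\bigcup_{k \in \mathbb{N}} \ker(T - \lambda_k I)$ is dense in $X$. -/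
/-!
Let `flag n` be the span of `e 0, …, e (n-1)` and `λₙ = f n (T (e n))`. Upper-triangularity
says that `T` preserves every `flag n`, and on `flag (n+1)` the coordinate `f n` turns `T` into
multiplication by `λₙ`. Hence, if `μ` differs from `λ₀, …, λₙ₋₁`, then `T - μ` is injective on
the finite-dimensional space `flag n`, so it maps `flag n` onto itself. For `μ = λₙ` the vector
`(T - λₙ) eₙ` lies in `flag n` (its `n`-th coordinate vanishes), so `eₙ = (eₙ - w) + w` with
`(T - λₙ) (eₙ - w) = 0` and `w ∈ flag n`; by strong induction every `eₙ` lies in the span of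
the eigenvectors, which is then dense because the `eₙ` span a dense subspace.
-/

open Submodule Module

namespace TriangularOperator

variable {K M : Type*} [Field K] [AddCommGroup M] [Module K M]

def IsBiorthogonal (e : ℕ → M) (f : ℕ → M →ₗ[K] K) : Prop :=
  ∀ k j, f k (e j) = if k = j then 1 else 0

def IsUpperTriangular (T : End K M) (e : ℕ → M) : Prop :=
  ∀ j, T (e j) ∈ span K (e '' Set.Iic j)

variable (K) in
def flag (e : ℕ → M) (n : ℕ) : Submodule K M :=
  span K (e '' Set.Iio n)

variable {e : ℕ → M} {f : ℕ → M →ₗ[K] K} {T : End K M}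

theorem flag_zero : flag K e 0 = ⊥ := by
  simp [flag]

theorem span_image_Iic (n : ℕ) : span K (e '' Set.Iic n) = flag K e n ⊔ K ∙ e n := by
  rw [← Set.Iio_insert, Set.image_insert_eq, span_insert, sup_comm, flag]

theorem flag_succ (n : ℕ) : flag K e (n + 1) = span K (e '' Set.Iic n) := by
  rw [flag, ← Order.Iio_succ, Nat.succ_eq_succ]

instance (n : ℕ) : FiniteDimensional K (flag K e n) :=
  FiniteDimensional.span_of_finite K ((Set.finite_Iio n).image e)

theorem IsBiorthogonal.apply_eq_zero_of_mem_span (hbi : IsBiorthogonal e f) {s : Set ℕ}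
    {j : ℕ} (hj : j ∉ s) {x : M} (hx : x ∈ span K (e '' s)) : f j x = 0 := by
  refine (span_le (p := LinearMap.ker (f j))).2 ?_ hx
  rintro _ ⟨i, hi, rfl⟩
  rw [SetLike.mem_coe, LinearMap.mem_ker, hbi, if_neg]
  rintro rfl
  exact hj hi

theorem IsBiorthogonal.apply_eq_zero_of_mem_flag (hbi : IsBiorthogonal e f) {n : ℕ} {x : M}
    (hx : x ∈ flag K e n) : f n x = 0 :=
  hbi.apply_eq_zero_of_mem_span (s := Set.Iio n) (lt_irrefl n) hx

theorem IsBiorthogonal.exists_mem_flag_eq_add_smul (hbi : IsBiorthogonal e f) {n : ℕ}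
    {x : M} (hx : x ∈ span K (e '' Set.Iic n)) : ∃ w ∈ flag K e n, x = w + f n x • e n := by
  rw [span_image_Iic] at hx
  obtain ⟨w, hw, z, hz, rfl⟩ := mem_sup.1 hx
  obtain ⟨c, rfl⟩ := mem_span_singleton.1 hz
  refine ⟨w, hw, ?_⟩
  rw [map_add, map_smul, hbi.apply_eq_zero_of_mem_flag hw, hbi, if_pos rfl,
    smul_eq_mul, mul_one, zero_add]

theorem IsBiorthogonal.mem_flag_of_apply_eq_zero (hbi : IsBiorthogonal e f) {n : ℕ}
    {x : M} (hx : x ∈ span K (e '' Set.Iic n)) (hfx : f n x = 0) : x ∈ flag K e n := by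
  obtain ⟨w, hw, hxw⟩ := hbi.exists_mem_flag_eq_add_smul hx
  rwa [hxw, hfx, zero_smul, add_zero]

theorem IsUpperTriangular.flag_le_comap (hT : IsUpperTriangular T e) (n : ℕ) :
    flag K e n ≤ (flag K e n).comap T := by
  refine span_le.2 ?_
  rintro _ ⟨i, hi, rfl⟩
  exact span_mono (Set.image_mono (Set.Iic_subset_Iio.2 hi)) (hT i)

theorem apply_apply_eq_mul_diag (hbi : IsBiorthogonal e f) (hT : IsUpperTriangular T e)
    {n : ℕ} {x : M} (hx : x ∈ span K (e '' Set.Iic n)) :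
    f n (T x) = f n x * f n (T (e n)) := by
  obtain ⟨w, hw, hxw⟩ := hbi.exists_mem_flag_eq_add_smul hx
  have hTw : f n (T w) = 0 := hbi.apply_eq_zero_of_mem_flag (hT.flag_le_comap n hw)
  conv_lhs => rw [hxw]
  rw [map_add, map_smul, map_add, map_smul, hTw, smul_eq_mul, zero_add]

theorem eq_zero_of_mem_flag_of_apply_eq_smul (hbi : IsBiorthogonal e f)
    (hT : IsUpperTriangular T e) {μ : K} :
    ∀ {n : ℕ} {x : M}, (∀ i < n, f i (T (e i)) ≠ μ) → x ∈ flag K e n → T x = μ • x → x = 0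
  | 0, x, _, hx, _ => by simpa [flag_zero] using hx
  | n + 1, x, hμ, hx, hTx => by
    rw [flag_succ] at hx
    have hfx : f n x = 0 := by
      have h := apply_apply_eq_mul_diag hbi hT hx
      rw [hTx, map_smul, smul_eq_mul, mul_comm] at h
      exact (mul_eq_mul_left_iff.1 h.symm).resolve_left (hμ n n.lt_succ_self)
    exact eq_zero_of_mem_flag_of_apply_eq_smul hbi hT (fun i hi => hμ i (hi.trans n.lt_succ_self))
      (hbi.mem_flag_of_apply_eq_zero hx hfx) hTx

theorem exists_mem_flag_sub_smul_eq (hbi : IsBiorthogonal e f) (hT : IsUpperTriangular T e)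
    {n : ℕ} {μ : K} (hμ : ∀ i < n, f i (T (e i)) ≠ μ) {y : M} (hy : y ∈ flag K e n) :
    ∃ w ∈ flag K e n, T w - μ • w = y := by
  have hmaps : ∀ x ∈ flag K e n, (T - μ • 1) x ∈ flag K e n := fun x hx =>
    sub_mem (hT.flag_le_comap n hx) (smul_mem _ μ hx)
  have hinj : Function.Injective ((T - μ • 1).restrict hmaps) := by
    rw [← LinearMap.ker_eq_bot, LinearMap.ker_eq_bot']
    rintro ⟨x, hx⟩ hgx
    have hTx : T x - μ • x = 0 := congrArg Subtype.val hgx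
    exact Subtype.ext (eq_zero_of_mem_flag_of_apply_eq_smul hbi hT hμ hx (sub_eq_zero.1 hTx))
  obtain ⟨w, hw⟩ := LinearMap.injective_iff_surjective.1 hinj ⟨y, hy⟩
  exact ⟨w, w.2, congrArg Subtype.val hw⟩

theorem mem_iSup_eigenspace (hbi : IsBiorthogonal e f) (hT : IsUpperTriangular T e)
    (hdiag : Function.Injective fun k => f k (T (e k))) (n : ℕ) :
    e n ∈ ⨆ k, T.eigenspace (f k (T (e k))) := by
  induction n using Nat.strong_induction_on with
  | _ n ih =>
    set μ := f n (T (e n))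
    have hflag : flag K e n ≤ ⨆ k, T.eigenspace (f k (T (e k))) := by
      refine span_le.2 ?_
      rintro _ ⟨i, hi, rfl⟩
      exact ih i hi
    have hy : T (e n) - μ • e n ∈ flag K e n := by
      refine hbi.mem_flag_of_apply_eq_zero
        (sub_mem (hT n) (smul_mem _ μ (subset_span ⟨n, Set.self_mem_Iic, rfl⟩))) ?_
      rw [map_sub, map_smul, hbi, if_pos rfl, smul_eq_mul, mul_one, sub_self]
    obtain ⟨w, hw, hTw⟩ :=
      exists_mem_flag_sub_smul_eq hbi hT (fun i hi => hdiag.ne hi.ne) hy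
    have hker : e n - w ∈ T.eigenspace μ := by
      rw [End.mem_eigenspace_iff, map_sub, smul_sub, sub_eq_sub_iff_sub_eq_sub, hTw]
    simpa using add_mem (le_iSup (fun k => T.eigenspace (f k (T (e k)))) n hker) (hflag hw)

end TriangularOperator

open TriangularOperator in
theorem stmt_3_general (𝕜 : Type*) [RCLike 𝕜] (X : Type*) [NormedAddCommGroup X]
    [NormedSpace 𝕜 X]
    (e : ℕ → X) (f : ℕ → X →L[𝕜] 𝕜)
    (hdense : Dense (Submodule.span 𝕜 (Set.range e) : Set X))
    (hbi : ∀ k j, f k (e j) = if k = j then 1 else 0)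
    (T : X →L[𝕜] X)
    (htri : ∀ j, T (e j) ∈ Submodule.span 𝕜 (e '' {i | i ≤ j}))
    (lam : ℕ → 𝕜) (hlam : ∀ k, lam k = f k (T (e k)))
    (hdistinct : ∀ k l, k ≠ l → lam k ≠ lam l) :
    Dense (Submodule.span 𝕜
      (⋃ k, (LinearMap.ker ((T - lam k • (1 : X →L[𝕜] X)) : X →ₗ[𝕜] X) : Set X)) : Set X) := by
  obtain rfl : lam = fun k => f k (T (e k)) := funext hlam
  have hdiag : Function.Injective fun k => f k (T (e k)) := fun k l =>
    not_imp_not.1 (hdistinct k l)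
  refine hdense.mono (SetLike.coe_subset_coe.2 (span_le.2 ?_))
  rintro _ ⟨n, rfl⟩
  have hn := mem_iSup_eigenspace (f := fun k => (f k : X →ₗ[𝕜] 𝕜)) (T := (T : X →ₗ[𝕜] X))
    hbi htri hdiag n
  simpa [span_iUnion, End.eigenspace_def] using hn

/-- If `T` is an upper-triangular operator with respect to a bounded biorthogonal
sequence with dense span, whose diagonal entries are pairwise distinct, then the span of
the union of the eigenspaces `ker (T - λₖ I)` is dense. -/
theorem stmt_3 (𝕜 : Type*) [RCLike 𝕜] (X : Type*) [NormedAddCommGroup X]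
    [NormedSpace 𝕜 X] [CompleteSpace X] [TopologicalSpace.SeparableSpace X]
    (hinf : ¬ FiniteDimensional 𝕜 X)
    (e : ℕ → X) (f : ℕ → X →L[𝕜] 𝕜)
    (hdense : Dense (Submodule.span 𝕜 (Set.range e) : Set X))
    (hbi : ∀ k j, f k (e j) = if k = j then 1 else 0)
    (hnorm : ∀ k, ‖e k‖ = 1)
    (hbdd : ∃ K : ℝ, ∀ k, ‖f k‖ ≤ K)
    (T : X →L[𝕜] X)
    (htri : ∀ j, T (e j) ∈ Submodule.span 𝕜 (e '' {i | i ≤ j}))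
    (lam : ℕ → 𝕜) (hlam : ∀ k, lam k = f k (T (e k)))
    (hdistinct : ∀ k l, k ≠ l → lam k ≠ lam l) :
    Dense (Submodule.span 𝕜
      (⋃ k, (LinearMap.ker ((T - lam k • (1 : X →L[𝕜] X)) : X →ₗ[𝕜] X) : Set X)) : Set X) :=
  stmt_3_general 𝕜 X e f hdense hbi T htri lam hlam hdistinct
end

section
/- Let $X$ be a separable infinite-dimensional Banach space over $\mathbb{K}$ ($\mathbb{K} = \mathbb{R}$ or $\mathbb{C}$), let $(e_k, e_k^*)_{k \in \mathbb{N}} \subseteq X \times X^*$ be a bounded biorthogonal sequence with dense span, and let $T : X \to X$ be a continuous linear operator which is upper-triangular with respect to $(e_k, e_k^*)_{k\in\mathbb{N}}$, with diagonal $\lambda_k := \langle e_k^*, T e_k \rangle$. If $\lambda_k \neq \lambda_l$ whenever $k \neq l$, then the set of cyclic vectors for $T$ is co-meager in $X$ (it contains a dense $G_\delta$ subset of $X$). -/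
/-!
Because the diagonal entries `λ k` are distinct, `T - λ k` is invertible on
`span {e i | i < k}` (back-substitution on a triangular system), so `T` has an eigenvector
`v k ∈ e k + span {e i | i < k}` for `λ k`, and the `v k` span the same dense subspace as the
`e k`. A vector `x = ∑ a i • v i` with all `a i ≠ 0` reaches every vector of `span {v i}` as some
`p(T) x`, by Lagrange interpolation at the distinct eigenvalues, and such vectors are dense. So for
every nonempty open `W` the open set `{x | ∃ p, p(T) x ∈ W}` is dense; intersecting over a
countable basis, Baire's theorem yields a dense `Gδ` of vectors whose polynomial orbit is dense.
-/

open Polynomial Set Submodule TopologicalSpace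

theorem isGδ_and_dense_setOf_denseRange {ι X Y : Type*} [TopologicalSpace X] [BaireSpace X]
    [TopologicalSpace Y] [SecondCountableTopology Y] {φ : ι → X → Y} (hφ : ∀ i, Continuous (φ i))
    (hdense : ∀ V : Set Y, IsOpen V → V.Nonempty → Dense {x | ∃ i, φ i x ∈ V}) :
    IsGδ {x | DenseRange fun i => φ i x} ∧ Dense {x | DenseRange fun i => φ i x} := by
  have hB := isBasis_countableBasis Y
  have hopen : ∀ V ∈ countableBasis Y, IsOpen {x | ∃ i, φ i x ∈ V} := fun V hV => by
    rw [ofPred_exists]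
    exact isOpen_iUnion fun i => (hB.isOpen hV).preimage (hφ i)
  have heq : {x | DenseRange fun i => φ i x} = ⋂ V ∈ countableBasis Y, {x | ∃ i, φ i x ∈ V} := by
    ext x
    simp only [DenseRange, hB.dense_iff, mem_ofPred_eq, mem_iInter₂]
    refine forall₂_congr fun V hV => ?_
    rw [imp_iff_right (nonempty_of_mem_countableBasis hV)]
    constructor
    · rintro ⟨_, hyV, i, rfl⟩
      exact ⟨i, hyV⟩
    · rintro ⟨i, hi⟩
      exact ⟨φ i x, hi, i, rfl⟩
  rw [heq]
  exact ⟨.biInter_of_isOpen (countable_countableBasis Y) hopen,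
    dense_biInter_of_isOpen hopen (countable_countableBasis Y)
      fun V hV => hdense V (hB.isOpen hV) (nonempty_of_mem_countableBasis hV)⟩

theorem ContinuousLinearMap.aeval_apply {R M : Type*} [CommRing R] [AddCommGroup M] [Module R M]
    [TopologicalSpace M] [IsTopologicalAddGroup M] [ContinuousConstSMul R M] (T : M →L[R] M)
    (p : R[X]) (x : M) : aeval T p x = aeval (T : M →ₗ[R] M) p x := by
  simp [aeval_eq_sum_range, Module.End.pow_apply]

theorem ContinuousLinearMap.aeval_apply_mem_span_orbit {R M : Type*} [CommRing R]
    [AddCommGroup M] [Module R M] [TopologicalSpace M] [IsTopologicalAddGroup M]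
    [ContinuousConstSMul R M] (T : M →L[R] M) (p : R[X]) (x : M) :
    aeval T p x ∈ span R {y | ∃ n : ℕ, (T ^ n) x = y} := by
  rw [aeval_eq_sum_range, sum_apply]
  exact sum_mem fun i _ => smul_mem _ _ (subset_span ⟨i, rfl⟩)

theorem exists_aeval_apply_sum_eq {K V ι : Type*} [Field K] [AddCommGroup V] [Module K V]
    [Fintype ι] [DecidableEq ι] (T : Module.End K V) {v : ι → V} {μ : ι → K}
    (hμ : Function.Injective μ) (hv : ∀ i, T (v i) = μ i • v i) {a : ι → K} (ha : ∀ i, a i ≠ 0)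
    {u : V} (hu : u ∈ span K (range v)) : ∃ p : K[X], aeval T p (∑ i, a i • v i) = u := by
  obtain ⟨c, rfl⟩ := (mem_span_range_iff_exists_fun K).mp hu
  refine ⟨Lagrange.interpolate Finset.univ μ (fun i => c i / a i), ?_⟩
  rw [map_sum]
  refine Finset.sum_congr rfl fun i _ => ?_
  rw [map_smul, Module.End.aeval_apply_of_mem_apply_eq_smul (hv i),
    Lagrange.eval_interpolate_at_node _ hμ.injOn (Finset.mem_univ i), smul_smul,
    mul_div_cancel₀ _ (ha i)]

theorem span_range_subset_closure_image_sum {K V ι : Type*} [NontriviallyNormedField K]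
    [AddCommMonoid V] [Module K V] [TopologicalSpace V] [ContinuousAdd V] [ContinuousSMul K V]
    [Fintype ι] (v : ι → V) :
    (span K (range v) : Set V) ⊆
      closure ((fun a : ι → K => ∑ i, a i • v i) '' univ.pi fun _ => {0}ᶜ) := by
  intro y hy
  obtain ⟨b, rfl⟩ := (mem_span_range_iff_exists_fun K).mp hy
  exact mem_closure_image (by fun_prop : Continuous fun a : ι → K => ∑ i, a i • v i).continuousAt
    (dense_pi univ (fun _ _ => dense_compl_singleton 0) b)

namespace UpperTriangular

section Algebraic

variable {K V : Type*} [Field K] [AddCommGroup V] [Module K V] {e : ℕ → V}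

variable (K) in
def partialSpan (e : ℕ → V) (n : ℕ) : Submodule K V :=
  span K (e '' Iio n)

theorem partialSpan_mono (e : ℕ → V) : Monotone (partialSpan K e) :=
  fun _ _ h => span_mono (image_mono (Iio_subset_Iio h))

theorem partialSpan_zero : partialSpan K e 0 = ⊥ := by
  simp [partialSpan]

theorem partialSpan_succ (n : ℕ) :
    partialSpan K e (n + 1) = span K (insert (e n) (e '' Iio n)) := by
  rw [partialSpan, Iio_add_one_eq_Iic, ← Iio_insert, image_insert_eq]

theorem mem_partialSpan_succ (e : ℕ → V) (n : ℕ) : e n ∈ partialSpan K e (n + 1) :=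
  subset_span ⟨n, n.lt_succ_self, rfl⟩

theorem exists_mem_partialSpan {y : V} (hy : y ∈ span K (range e)) :
    ∃ n, y ∈ partialSpan K e n := by
  rw [← image_univ, ← iUnion_Iio, image_iUnion, span_iUnion] at hy
  exact (mem_iSup_of_directed _ (partialSpan_mono e).directed_le).mp hy

theorem partialSpan_le_span_image {v : ℕ → V} (hv : ∀ k, v k - e k ∈ partialSpan K e k)
    (n : ℕ) : partialSpan K e n ≤ span K (v '' Iio n) := by
  induction n with
  | zero => simp [partialSpan_zero]
  | succ n ih =>
    have hF : partialSpan K e n ≤ span K (v '' Iio (n + 1)) :=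
      ih.trans (span_mono (image_mono (Iio_subset_Iio n.le_succ)))
    have hvn : v n ∈ span K (v '' Iio (n + 1)) := subset_span ⟨n, n.lt_succ_self, rfl⟩
    rw [partialSpan_succ, span_le, insert_subset_iff]
    exact ⟨by simpa using sub_mem hvn (hF (hv n)), fun x hx => hF (subset_span hx)⟩

variable {f : ℕ → V →ₗ[K] K}

theorem apply_eq_zero_of_mem_partialSpan (hbi : ∀ k j, f k (e j) = if k = j then 1 else 0)
    {n : ℕ} {z : V} (hz : z ∈ partialSpan K e n) : f n z = 0 := by
  have : partialSpan K e n ≤ LinearMap.ker (f n) := span_le.mpr <| by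
    rintro _ ⟨i, hi, rfl⟩
    simp [hbi, (show i < n from hi).ne']
  exact this hz

theorem sub_smul_mem_partialSpan (hbi : ∀ k j, f k (e j) = if k = j then 1 else 0)
    {n : ℕ} {z : V} (hz : z ∈ partialSpan K e (n + 1)) :
    z - f n z • e n ∈ partialSpan K e n := by
  rw [partialSpan_succ, mem_span_insert] at hz
  obtain ⟨c, w, hw, rfl⟩ := hz
  have hw : w ∈ partialSpan K e n := hw
  simpa [hbi, apply_eq_zero_of_mem_partialSpan hbi hw] using hw

variable {T : Module.End K V}

theorem partialSpan_le_comap (htri : ∀ j, T (e j) ∈ span K (e '' {i | i ≤ j})) (n : ℕ) :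
    partialSpan K e n ≤ (partialSpan K e n).comap T :=
  span_le.mpr <| by
    rintro _ ⟨i, hi, rfl⟩
    exact span_mono (image_mono fun j (hj : j ≤ i) => lt_of_le_of_lt hj hi) (htri i)

theorem apply_sub_smul_diag_mem_partialSpan (hbi : ∀ k j, f k (e j) = if k = j then 1 else 0)
    (htri : ∀ j, T (e j) ∈ span K (e '' {i | i ≤ j})) (n : ℕ) :
    T (e n) - f n (T (e n)) • e n ∈ partialSpan K e n :=
  sub_smul_mem_partialSpan hbi (partialSpan_le_comap htri (n + 1) (mem_partialSpan_succ e n))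

theorem exists_apply_sub_smul_eq (hbi : ∀ k j, f k (e j) = if k = j then 1 else 0)
    (htri : ∀ j, T (e j) ∈ span K (e '' {i | i ≤ j})) {μ : K} (n : ℕ)
    (hμ : ∀ i < n, f i (T (e i)) ≠ μ) :
    ∀ z ∈ partialSpan K e n, ∃ w ∈ partialSpan K e n, T w - μ • w = z := by
  induction n with
  | zero =>
    intro z hz
    rw [partialSpan_zero, Submodule.mem_bot] at hz
    exact ⟨0, zero_mem _, by simp [hz]⟩
  | succ n ih =>
    intro z hz
    set c := f n z
    set r := T (e n) - f n (T (e n)) • e n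
    set d := f n (T (e n)) - μ
    have hd : d ≠ 0 := sub_ne_zero.mpr (hμ n n.lt_succ_self)
    -- the `e n`-coordinate is matched by `(c / d) • e n`; the rest lies in `partialSpan K e n`
    obtain ⟨w, hw, hTw⟩ := ih (fun i hi => hμ i (hi.trans n.lt_succ_self))
      (z - c • e n - (c / d) • r)
      (sub_mem (sub_smul_mem_partialSpan hbi hz)
        (smul_mem _ _ (apply_sub_smul_diag_mem_partialSpan hbi htri n)))
    refine ⟨(c / d) • e n + w,
      add_mem (smul_mem _ _ (mem_partialSpan_succ e n)) (partialSpan_mono e n.le_succ hw), ?_⟩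
    have hdiag : T (e n) - μ • e n = r + d • e n := by simp only [r, d]; module
    calc T ((c / d) • e n + w) - μ • ((c / d) • e n + w)
        = (c / d) • (T (e n) - μ • e n) + (T w - μ • w) := by
          simp only [map_add, map_smul]; module
      _ = z := by
          rw [hdiag, hTw, smul_add, smul_smul, div_mul_cancel₀ c hd]; module

theorem exists_eigenvector (hbi : ∀ k j, f k (e j) = if k = j then 1 else 0)
    (htri : ∀ j, T (e j) ∈ span K (e '' {i | i ≤ j})) (k : ℕ)
    (hk : ∀ i < k, f i (T (e i)) ≠ f k (T (e k))) :
    ∃ v, v - e k ∈ partialSpan K e k ∧ T v = f k (T (e k)) • v := by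
  obtain ⟨w, hw, hTw⟩ := exists_apply_sub_smul_eq hbi htri k hk _
    (apply_sub_smul_diag_mem_partialSpan hbi htri k)
  refine ⟨e k - w, by simpa using neg_mem hw, ?_⟩
  rw [map_sub]
  linear_combination (norm := module) -hTw

end Algebraic

theorem dense_setOf_exists_aeval_apply_mem {K V : Type*} [NontriviallyNormedField K]
    [AddCommGroup V] [Module K V] [TopologicalSpace V] [ContinuousAdd V] [ContinuousSMul K V]
    {e : ℕ → V} {f : ℕ → V →ₗ[K] K} (hdense : Dense (span K (range e) : Set V))
    (hbi : ∀ k j, f k (e j) = if k = j then 1 else 0) {T : Module.End K V}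
    (htri : ∀ j, T (e j) ∈ span K (e '' {i | i ≤ j}))
    (hdiag : Function.Injective fun k => f k (T (e k))) {W : Set V} (hW : IsOpen W)
    (hWne : W.Nonempty) : Dense {x | ∃ p : K[X], aeval T p x ∈ W} := by
  obtain ⟨u, huW, hu⟩ := hdense.inter_open_nonempty W hW hWne
  choose v hve hv using fun k => exists_eigenvector hbi htri k fun i hi => hdiag.ne hi.ne
  refine dense_closure.mp (hdense.mono fun y hy => ?_)
  obtain ⟨n, hyn, hun⟩ : ∃ n, y ∈ partialSpan K e n ∧ u ∈ partialSpan K e n := by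
    obtain ⟨n₁, hy₁⟩ := exists_mem_partialSpan hy
    obtain ⟨n₂, hu₂⟩ := exists_mem_partialSpan hu
    exact ⟨max n₁ n₂, partialSpan_mono e (le_max_left _ _) hy₁,
      partialSpan_mono e (le_max_right _ _) hu₂⟩
  have hspan : partialSpan K e n ≤ span K (range fun i : Iio n => v i) :=
    image_eq_range v _ ▸ partialSpan_le_span_image hve n
  refine closure_mono ?_ (span_range_subset_closure_image_sum _ (hspan hyn))
  rintro _ ⟨a, ha, rfl⟩
  obtain ⟨p, hp⟩ := exists_aeval_apply_sum_eq T (hdiag.comp Subtype.val_injective)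
    (fun i => hv i) (fun i => ha i (mem_univ i)) (hspan hun)
  exact ⟨p, hp ▸ huW⟩

end UpperTriangular

theorem stmt_4_general (𝕜 : Type*) [RCLike 𝕜] (X : Type*) [NormedAddCommGroup X]
    [NormedSpace 𝕜 X] [CompleteSpace X] [TopologicalSpace.SeparableSpace X]
    (e : ℕ → X) (f : ℕ → X →L[𝕜] 𝕜)
    (hdense : Dense (Submodule.span 𝕜 (Set.range e) : Set X))
    (hbi : ∀ k j, f k (e j) = if k = j then 1 else 0)
    (T : X →L[𝕜] X)
    (htri : ∀ j, T (e j) ∈ Submodule.span 𝕜 (e '' {i | i ≤ j}))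
    (lam : ℕ → 𝕜) (hlam : ∀ k, lam k = f k (T (e k)))
    (hdistinct : ∀ k l, k ≠ l → lam k ≠ lam l) :
    ∃ G : Set X, IsGδ G ∧ Dense G ∧ ∀ x ∈ G,
      Dense (Submodule.span 𝕜 {y : X | ∃ n : ℕ, (T ^ n) x = y} : Set X) := by
  have hdiag : Function.Injective fun k => f k (T (e k)) := fun k l hkl => by
    by_contra hne
    exact hdistinct k l hne (by simpa only [hlam] using hkl)
  obtain ⟨hGδ, hG⟩ := isGδ_and_dense_setOf_denseRange (φ := fun (p : 𝕜[X]) x => aeval T p x)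
    (fun p => (aeval T p).continuous) fun W hW hWne => by
      simpa only [ContinuousLinearMap.aeval_apply] using
        UpperTriangular.dense_setOf_exists_aeval_apply_mem hdense hbi htri hdiag hW hWne
  exact ⟨_, hGδ, hG, fun x hx => hx.mono
    (range_subset_iff.mpr (T.aeval_apply_mem_span_orbit · x))⟩

/-- If `T` is an upper-triangular operator with respect to a bounded biorthogonal
sequence with dense span, whose diagonal entries are pairwise distinct, then the set of
cyclic vectors for `T` is co-meager: it contains a dense `Gδ` subset of `X`. -/
theorem stmt_4 (𝕜 : Type*) [RCLike 𝕜] (X : Type*) [NormedAddCommGroup X]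
    [NormedSpace 𝕜 X] [CompleteSpace X] [TopologicalSpace.SeparableSpace X]
    (hinf : ¬ FiniteDimensional 𝕜 X)
    (e : ℕ → X) (f : ℕ → X →L[𝕜] 𝕜)
    (hdense : Dense (Submodule.span 𝕜 (Set.range e) : Set X))
    (hbi : ∀ k j, f k (e j) = if k = j then 1 else 0)
    (hnorm : ∀ k, ‖e k‖ = 1)
    (hbdd : ∃ K : ℝ, ∀ k, ‖f k‖ ≤ K)
    (T : X →L[𝕜] X)
    (htri : ∀ j, T (e j) ∈ Submodule.span 𝕜 (e '' {i | i ≤ j}))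
    (lam : ℕ → 𝕜) (hlam : ∀ k, lam k = f k (T (e k)))
    (hdistinct : ∀ k l, k ≠ l → lam k ≠ lam l) :
    ∃ G : Set X, IsGδ G ∧ Dense G ∧ ∀ x ∈ G,
      Dense (Submodule.span 𝕜 {y : X | ∃ n : ℕ, (T ^ n) x = y} : Set X) :=
  stmt_4_general 𝕜 X e f hdense hbi T htri lam hlam hdistinct
end

section
/- Let $n \geq 1$ and $m \geq 1$ be integers with $2n \leq m$, and set $\lambda := \exp(2\pi i / m)$. Then $\left| \sum_{j=0}^{n-1} \lambda^j \right| \geq \frac{2}{\pi} n.$ -/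
/-!
With `x = 2π/m`, the geometric sum of `exp (I x)` has modulus `|sin (n x / 2)| / |sin (x / 2)|`.
As `n x / 2 ≤ π / 2`, Jordan's inequality `sin t ≥ (2/π) t` bounds the numerator from below
and `sin t ≤ t` bounds the denominator from above, which leaves `(2/π) n`.
-/

open Complex Finset

theorem norm_geom_sum_exp_I_mul (n : ℕ) {x : ℝ} (hx : Real.sin (x / 2) ≠ 0) :
    ‖∑ j ∈ range n, exp (I * x) ^ j‖ = |Real.sin (n * x / 2)| / |Real.sin (x / 2)| := by
  have hne : exp (I * x) ≠ 1 := by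
    rw [← sub_ne_zero, ← norm_ne_zero_iff, norm_exp_I_mul_ofReal_sub_one]
    simpa using hx
  have hpow : exp (I * x) ^ n = exp (I * ↑(n * x)) := by
    rw [← exp_nat_mul]; push_cast; ring_nf
  rw [geom_sum_eq hne, norm_div, hpow, norm_exp_I_mul_ofReal_sub_one,
    norm_exp_I_mul_ofReal_sub_one, Real.norm_eq_abs, Real.norm_eq_abs, abs_mul, abs_mul,
    mul_div_mul_left _ _ (by norm_num)]

theorem two_div_pi_mul_le_norm_geom_sum_exp_I_mul {n : ℕ} {x : ℝ} (hx : 0 ≤ x)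
    (hnx : n * x ≤ Real.pi) : 2 / Real.pi * n ≤ ‖∑ j ∈ range n, exp (I * x) ^ j‖ := by
  rcases Nat.eq_zero_or_pos n with rfl | hn
  · simp
  rcases hx.eq_or_lt with rfl | hx
  · simpa using
      mul_le_of_le_one_left n.cast_nonneg (div_le_one_of_le₀ Real.two_le_pi Real.pi_pos.le)
  have hxπ : x ≤ Real.pi := le_trans (le_mul_of_one_le_left hx.le (by exact_mod_cast hn)) hnx
  have hsin : 0 < Real.sin (x / 2) :=
    Real.sin_pos_of_pos_of_lt_pi (by positivity) (by linarith [Real.pi_pos])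
  have hsin_n : 2 / Real.pi * (n * x / 2) ≤ Real.sin (n * x / 2) :=
    Real.mul_le_sin (by positivity) (by linarith)
  rw [norm_geom_sum_exp_I_mul n hsin.ne', abs_of_pos hsin,
    abs_of_nonneg (le_trans (by positivity) hsin_n), le_div_iff₀ hsin]
  calc 2 / Real.pi * n * Real.sin (x / 2) ≤ 2 / Real.pi * n * (x / 2) := by
        gcongr; exact Real.sin_le (by positivity)
    _ = 2 / Real.pi * (n * x / 2) := by ring
    _ ≤ Real.sin (n * x / 2) := hsin_n

theorem stmt_10_general (n m : ℕ) (h : 2 * n ≤ m) :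
    (2 / Real.pi) * (n : ℝ) ≤
      ‖(∑ j ∈ Finset.range n,
        Complex.exp (2 * (Real.pi : ℂ) * Complex.I / (m : ℂ)) ^ j)‖ := by
  have hexp : 2 * (Real.pi : ℂ) * I / m = I * ↑(2 * Real.pi / m) := by push_cast; ring
  rw [hexp]
  refine two_div_pi_mul_le_norm_geom_sum_exp_I_mul (by positivity) ?_
  rcases Nat.eq_zero_or_pos m with rfl | hm
  · simp [Real.pi_pos.le]
  rw [mul_div_assoc', div_le_iff₀ (by positivity)]
  have : (2 * n : ℝ) ≤ m := by exact_mod_cast h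
  nlinarith [Real.pi_pos]

/-- If `1 ≤ n`, `1 ≤ m` and `2n ≤ m`, and `λ = exp(2πi/m)`, then
`|∑_{j=0}^{n-1} λ^j| ≥ (2/π)·n`. -/
theorem stmt_10 (n m : ℕ) (hn : 1 ≤ n) (hm : 1 ≤ m) (h : 2 * n ≤ m) :
    (2 / Real.pi) * (n : ℝ) ≤
      ‖(∑ j ∈ Finset.range n,
        Complex.exp (2 * (Real.pi : ℂ) * Complex.I / (m : ℂ)) ^ j)‖ :=
  stmt_10_general n m h
end

section
/- Let $X$ be a Banach space over $\mathbb{K}$ ($\mathbb{K} = \mathbb{R}$ or $\mathbb{C}$), let $(e_k, e_k^*)_{k \in \mathbb{N}} \subseteq X \times X^*$ be a bounded biorthogonal sequence with dense span, with $K := \sup_{k} \|e_k^*\|$, and let $(\lambda_k)_{k\in\mathbb{N}}$ be a sequence in $\mathbb{K}$ with $\sum_{k\in\mathbb{N}} |\lambda_k - 1| < \infty$. Then there exists a (unique) continuous linear operator $R : X \to X$ such that $R e_k = \lambda_k e_k$ for every $k \in \mathbb{N}$, and $\|R\| \leq 1 + K \sum_{k\in\mathbb{N}} |\lambda_k - 1|$.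 -/
/-!
The operator is `R = I + ∑ₖ (λₖ - 1) eₖ* ⊗ eₖ`. Since `‖eₖ* ⊗ eₖ‖ = ‖eₖ*‖ ≤ K`, the series
converges absolutely in operator norm, which gives the bound; biorthogonality gives
`R eₖ = λₖ eₖ`, and uniqueness holds because the `eₖ` span a dense subspace.
-/

open ContinuousLinearMap

section RankOneSeries

variable {𝕜 X ι : Type*} [RCLike 𝕜] [NormedAddCommGroup X] [NormedSpace 𝕜 X]

theorem summable_smul_smulRight_of_norm_le [CompleteSpace X]
    {f : ι → StrongDual 𝕜 X} {e : ι → X} {μ : ι → 𝕜} {C : ℝ}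
    (hfe : ∀ k, ‖f k‖ * ‖e k‖ ≤ C) (hμ : Summable fun k => ‖μ k‖) :
    Summable fun k => μ k • (f k).smulRight (e k) := by
  refine Summable.of_norm_bounded (hμ.mul_right C) fun k => ?_
  rw [norm_smul, norm_smulRight_apply]
  exact mul_le_mul_of_nonneg_left (hfe k) (norm_nonneg _)

theorem norm_tsum_smul_smulRight_le [CompleteSpace X]
    {f : ι → StrongDual 𝕜 X} {e : ι → X} {μ : ι → 𝕜} {C : ℝ}
    (hfe : ∀ k, ‖f k‖ * ‖e k‖ ≤ C) (hμ : Summable fun k => ‖μ k‖) :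
    ‖∑' k, μ k • (f k).smulRight (e k)‖ ≤ C * ∑' k, ‖μ k‖ := by
  rw [← tsum_mul_left]
  refine tsum_of_norm_bounded (hμ.mul_left C).hasSum fun k => ?_
  rw [norm_smul, norm_smulRight_apply, mul_comm C]
  exact mul_le_mul_of_nonneg_left (hfe k) (norm_nonneg _)

theorem tsum_smul_smulRight_apply_of_biorthogonal [DecidableEq ι]
    {f : ι → StrongDual 𝕜 X} {e : ι → X} {μ : ι → 𝕜}
    (hbi : ∀ k j, f k (e j) = if k = j then 1 else 0)
    (hs : Summable fun k => μ k • (f k).smulRight (e k)) (j : ι) :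
    (∑' k, μ k • (f k).smulRight (e k)) (e j) = μ j • e j := by
  have heval := (hs.hasSum.mapL (apply 𝕜 X (e j))).tsum_eq
  simp only [apply_apply] at heval
  rw [← heval, tsum_eq_single j]
  · simp [hbi]
  · intro k hk
    simp [hbi, hk]

end RankOneSeries

/-- Given a bounded biorthogonal sequence with dense span on a Banach space `X` and a
sequence `(λₖ)` with `∑ |λₖ - 1| < ∞`, there is a unique continuous linear operator `R`
on `X` with `R eₖ = λₖ eₖ` for every `k`, and `‖R‖ ≤ 1 + K ∑ |λₖ - 1|`, where
`K = sup ‖eₖ*‖`. -/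
theorem stmt_11 (𝕜 : Type*) [RCLike 𝕜] (X : Type*) [NormedAddCommGroup X]
    [NormedSpace 𝕜 X] [CompleteSpace X]
    (e : ℕ → X) (f : ℕ → X →L[𝕜] 𝕜)
    (hdense : Dense (Submodule.span 𝕜 (Set.range e) : Set X))
    (hbi : ∀ k j, f k (e j) = if k = j then 1 else 0)
    (hnorm : ∀ k, ‖e k‖ = 1)
    (hbdd : BddAbove (Set.range fun k => ‖f k‖))
    (lam : ℕ → 𝕜) (hsum : Summable fun k => ‖lam k - 1‖) :
    ∃ R : X →L[𝕜] X, (∀ k, R (e k) = lam k • e k) ∧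
      ‖R‖ ≤ 1 + (⨆ k, ‖f k‖) * ∑' k, ‖lam k - 1‖ ∧
      ∀ R' : X →L[𝕜] X, (∀ k, R' (e k) = lam k • e k) → R' = R := by
  have hfe : ∀ k, ‖f k‖ * ‖e k‖ ≤ ⨆ k, ‖f k‖ := fun k => by
    rw [hnorm, mul_one]; exact le_ciSup hbdd k
  set T := ∑' k, (lam k - 1) • (f k).smulRight (e k)
  have hR : ∀ k, (ContinuousLinearMap.id 𝕜 X + T) (e k) = lam k • e k := fun k => by
    rw [add_apply, tsum_smul_smulRight_apply_of_biorthogonal hbi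
      (summable_smul_smulRight_of_norm_le hfe hsum), id_apply, sub_smul, one_smul,
      add_sub_cancel]
  refine ⟨ContinuousLinearMap.id 𝕜 X + T, hR, ?_, fun R' hR' => ?_⟩
  · calc ‖ContinuousLinearMap.id 𝕜 X + T‖
        ≤ ‖ContinuousLinearMap.id 𝕜 X‖ + ‖T‖ := norm_add_le _ _
      _ ≤ 1 + (⨆ k, ‖f k‖) * ∑' k, ‖lam k - 1‖ :=
        add_le_add norm_id_le (norm_tsum_smul_smulRight_le hfe hsum)
  · refine ext_on hdense ?_
    rintro _ ⟨k, rfl⟩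
    rw [hR' k, hR k]
end

section
/- Let $X$ be a Banach space over $\mathbb{K}$ ($\mathbb{K} = \mathbb{R}$ or $\mathbb{C}$), let $(e_k, e_k^*)_{k \in \mathbb{N}} \subseteq X \times X^*$ be a bounded biorthogonal sequence with dense span, and let $(\varepsilon_k)_{k\in\mathbb{N}}$ be a sequence of strictly positive real numbers with $\varepsilon_k \to 0$ as $k \to \infty$. Then the set $G := \{ x \in X \; ; \; |\langle e_k^*, x \rangle| > \varepsilon_k \text{ for infinitely many } k \in \mathbb{N} \}$ is a dense $G_\delta$ subset of $X$; in particular, $G$ is co-meager. -/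
open Filter Topology

/-! The set is `⋂ N, ⋃ k ≥ N, {x | εₖ < |⟨eₖ*, x⟩|}`, an intersection of open sets, so by Baire
it suffices that each tail union is dense. Given `x` and `r > 0`, pick `k ≥ N` with `2εₖ < r`:
either `x` itself lies in the `k`-th set, or `|⟨eₖ*, x⟩| ≤ εₖ` and moving `x` by less than `r`
along `eₖ` (on which `eₖ*` is `1`) pushes `|⟨eₖ*, ·⟩|` above `εₖ`. -/

section Frequently

variable {X : Type*} {s : ℕ → Set X}

theorem setOf_frequently_atTop_eq_iInter_iUnion :
    {x | ∃ᶠ k in atTop, x ∈ s k} = ⋂ N, ⋃ k ≥ N, s k := by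
  ext x
  simp [frequently_atTop]

theorem isGδ_setOf_frequently_atTop [TopologicalSpace X] (hs : ∀ k, IsOpen (s k)) :
    IsGδ {x | ∃ᶠ k in atTop, x ∈ s k} := by
  rw [setOf_frequently_atTop_eq_iInter_iUnion]
  exact .iInter fun N => (isOpen_biUnion fun k _ => hs k).isGδ

theorem setOf_frequently_atTop_mem_residual [TopologicalSpace X] [BaireSpace X]
    (hs : ∀ k, IsOpen (s k)) (hd : ∀ N, Dense (⋃ k ≥ N, s k)) :
    {x | ∃ᶠ k in atTop, x ∈ s k} ∈ residual X := by
  rw [setOf_frequently_atTop_eq_iInter_iUnion]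
  exact countable_iInter_mem.2 fun N =>
    residual_of_dense_open (isOpen_biUnion fun k _ => hs k) (hd N)

end Frequently

section Biorthogonal

variable {𝕜 E : Type*} [RCLike 𝕜] [NormedAddCommGroup E] [NormedSpace 𝕜 E]

theorem exists_mem_ball_lt_norm_apply {φ : E →L[𝕜] 𝕜} {v : E} (hφv : φ v = 1) (hv : ‖v‖ ≤ 1)
    (x : E) {ε r : ℝ} (hr : 0 < r) (hεr : 2 * ε < r) :
    ∃ y ∈ Metric.ball x r, ε < ‖φ y‖ := by
  rcases lt_or_ge ε ‖φ x‖ with hx | hx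
  · exact ⟨x, Metric.mem_ball_self hr, hx⟩
  set t : ℝ := ε + r / 2 with ht_def
  have hε : 0 ≤ ε := (norm_nonneg _).trans hx
  have ht : 0 ≤ t := by positivity
  refine ⟨x + (t : 𝕜) • v, ?_, ?_⟩
  · rw [Metric.mem_ball, dist_eq_norm, add_sub_cancel_left, norm_smul, RCLike.norm_ofReal,
      abs_of_nonneg ht]
    calc t * ‖v‖ ≤ t := mul_le_of_le_one_right ht hv
      _ < r := by linarith [ht_def]
  · rw [map_add, map_smul, hφv, smul_eq_mul, mul_one]
    calc ε < t - ‖φ x‖ := by linarith [ht_def]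
      _ = ‖(t : 𝕜)‖ - ‖φ x‖ := by rw [RCLike.norm_ofReal, abs_of_nonneg ht]
      _ ≤ ‖φ x + t‖ := by simpa [add_comm] using norm_sub_norm_le (t : 𝕜) (-φ x)

theorem dense_iUnion_ge_setOf_lt_norm_apply {e : ℕ → E} {f : ℕ → E →L[𝕜] 𝕜}
    (hfe : ∀ k, f k (e k) = 1) (he : ∀ k, ‖e k‖ ≤ 1) {ε : ℕ → ℝ}
    (hε : Tendsto ε atTop (𝓝 0)) (N : ℕ) :
    Dense (⋃ k ≥ N, {x | ε k < ‖f k x‖}) := by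
  refine Metric.dense_iff.2 fun x r hr => ?_
  obtain ⟨k, hkN, hk⟩ :=
    ((eventually_ge_atTop N).and (hε.eventually_lt_const (half_pos hr))).exists
  obtain ⟨y, hy, hyk⟩ := exists_mem_ball_lt_norm_apply (hfe k) (he k) x hr (by linarith)
  exact ⟨y, hy, Set.mem_biUnion hkN hyk⟩

end Biorthogonal

theorem stmt_12_general (𝕜 : Type*) [RCLike 𝕜] (X : Type*) [NormedAddCommGroup X]
    [NormedSpace 𝕜 X] [CompleteSpace X]
    (e : ℕ → X) (f : ℕ → X →L[𝕜] 𝕜)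
    (hbi : ∀ k j, f k (e j) = if k = j then 1 else 0)
    (hnorm : ∀ k, ‖e k‖ = 1)
    (eps : ℕ → ℝ) (hlim : Tendsto eps atTop (𝓝 0)) :
    IsGδ {x : X | ∃ᶠ k in atTop, eps k < ‖f k x‖} ∧
    Dense {x : X | ∃ᶠ k in atTop, eps k < ‖f k x‖} ∧
    {x : X | ∃ᶠ k in atTop, eps k < ‖f k x‖} ∈ residual X := by
  have hopen : ∀ k, IsOpen {x : X | eps k < ‖f k x‖} := fun k =>
    isOpen_lt continuous_const (f k).continuous.norm
  have hres := setOf_frequently_atTop_mem_residual hopen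
    (dense_iUnion_ge_setOf_lt_norm_apply (fun k => by simpa using hbi k k)
      (fun k => (hnorm k).le) hlim)
  exact ⟨isGδ_setOf_frequently_atTop hopen, dense_of_mem_residual hres, hres⟩

/-- Given a bounded biorthogonal sequence with dense span on a Banach space `X` and a
null sequence of strictly positive reals `(εₖ)`, the set of vectors `x` such that
`|⟨eₖ*, x⟩| > εₖ` for infinitely many `k` is a dense `Gδ` set; in particular it is
co-meager (i.e. residual). -/
theorem stmt_12 (𝕜 : Type*) [RCLike 𝕜] (X : Type*) [NormedAddCommGroup X]
    [NormedSpace 𝕜 X] [CompleteSpace X]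
    (e : ℕ → X) (f : ℕ → X →L[𝕜] 𝕜)
    (hdense : Dense (Submodule.span 𝕜 (Set.range e) : Set X))
    (hbi : ∀ k j, f k (e j) = if k = j then 1 else 0)
    (hnorm : ∀ k, ‖e k‖ = 1)
    (hbdd : ∃ K : ℝ, ∀ k, ‖f k‖ ≤ K)
    (eps : ℕ → ℝ) (heps : ∀ k, 0 < eps k) (hlim : Tendsto eps atTop (𝓝 0)) :
    IsGδ {x : X | ∃ᶠ k in atTop, eps k < ‖f k x‖} ∧
    Dense {x : X | ∃ᶠ k in atTop, eps k < ‖f k x‖} ∧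
    {x : X | ∃ᶠ k in atTop, eps k < ‖f k x‖} ∈ residual X :=
  stmt_12_general 𝕜 X e f hbi hnorm eps hlim
end

section
/- Let $X$ be a complex separable infinite-dimensional Banach space with a bounded biorthogonal sequence $(e_k, e_k^*)_{k \in \mathbb{N}} \subseteq X \times X^*$ with dense span. Let $(m_j)_{j\in\mathbb{N}}$ be a strictly increasing sequence of positive integers with $m_j > j$ for all $j$, let $(\omega_{2j-1})_{j\in\mathbb{N}}$ be non-zero complex numbers with $\lim_{j\to\infty} 1/(m_j |\omega_{2j-1}|) = 0$, and set $\lambda_{2j-1} := \exp(2\pi i / m_j^2)$ and $\lambda_{2j} := \exp(2\pi i \cdot 2 / m_j^2)$ for each $j$. Suppose $T : X \to X$ is a continuous linear operator such that for every $x \in X$ and every $j \in \mathbb{N}$: $\langle e_{2j-1}^*, Tx \rangle = \lambda_{2j-1} \langle e_{2j-1}^*, x \rangle + \omega_{2j-1} \langle e_{2j}^*, x \rangle$ and $\langle e_{2j}^*, Tx \rangle = \lambda_{2j} \langle e_{2j}^*, x \rangle$. Then the set $\mathrm{RRec}(T)$ of reiteratively recurrent vectors for $T$ is meager in $X$. 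-/
/-!
On the block spanned by `e (2 * j)`, `e (2 * j + 1)`, the operator `T` acts by an upper triangular
matrix with diagonal `ζ, ζ²`, where `ζ = exp (2πi / M)` and `M = mⱼ²`, and off-diagonal entry `ωⱼ`.
Hence the `2j`-th coordinate of `Tⁿ x` differs from that of `x` by at least
`|ζⁿ - 1| (M |ωⱼ| |f (2j+1) x| / 2π - K ‖x‖)`, where `K` bounds the `‖f k‖`. If `Tⁿ x` returns
to the unit ball around `x`, this forces `ζⁿ` close to `1`, i.e. `n mod M` close to `0` or `M`, so
the return set has upper Banach density `O(1 / (M |ωⱼ| |f (2j+1) x|)) + 1 / M`. A reiteratively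
recurrent `x` therefore has `supⱼ mⱼ² |ωⱼ| |f (2j+1) x| < ∞`, and since `mⱼ² |ωⱼ| → ∞` the sets
`{x | ∀ j, mⱼ² |ωⱼ| |f (2j+1) x| ≤ A}` are closed with empty interior.
-/

open Filter Topology

open scoped Classical in
noncomputable def upperBanachDensity (J : Set ℕ) : ℝ :=
  Filter.limsup (fun N : ℕ =>
    ⨆ m : ℕ, (((Finset.Ioc m (m + N)).filter (· ∈ J)).card : ℝ) / (N : ℝ)) Filter.atTop

open Real Finset

theorem card_filter_Ioc_le_of_mod_mem (M : ℕ) (S : Finset ℕ) (J : Set ℕ)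
    [DecidablePred (· ∈ J)] (hJ : ∀ n ∈ J, n % M ∈ S) (a N : ℕ) :
    #{n ∈ Ioc a (a + N) | n ∈ J} ≤ (N / M + 2) * #S := by
  calc #{n ∈ Ioc a (a + N) | n ∈ J}
      ≤ #(Icc (a / M) ((a + N) / M) ×ˢ S) := by
        refine card_le_card_of_injOn (fun n => (n / M, n % M)) (fun n hn => ?_) ?_
        · simp only [coe_filter, mem_Ioc, Set.mem_ofPred_eq] at hn
          simp only [coe_product, Set.mem_prod, mem_coe, mem_Icc]
          exact ⟨⟨Nat.div_le_div_right hn.1.1.le, Nat.div_le_div_right hn.1.2⟩, hJ n hn.2⟩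
        · intro p _ q _ hpq
          simp only [Prod.mk.injEq] at hpq
          rw [← Nat.div_add_mod p M, ← Nat.div_add_mod q M, hpq.1, hpq.2]
    _ = ((a + N) / M + 1 - a / M) * #S := by rw [card_product, Nat.card_Icc]
    _ ≤ (N / M + 2) * #S := by
        gcongr
        exact Nat.sub_le_iff_le_add.2 (by linarith [Nat.add_div_le_div_add_div_add_one a N M])

theorem upperBanachDensity_le_of_mod_mem (M : ℕ) (S : Finset ℕ) (J : Set ℕ)
    (hJ : ∀ n ∈ J, n % M ∈ S) :
    upperBanachDensity J ≤ #S / M := by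
  classical
  set g : ℕ → ℝ := fun N => ⨆ a : ℕ, (#{n ∈ Finset.Ioc a (a + N) | n ∈ J} : ℝ) / N
  have hbound : ∀ N, 1 ≤ N → g N ≤ #S / M + 2 * #S / N := fun N hN => ciSup_le fun a => by
    have hN : (N : ℝ) ≠ 0 := by positivity
    calc (#{n ∈ Finset.Ioc a (a + N) | n ∈ J} : ℝ) / N ≤ ((N / M : ℕ) * #S + 2 * #S) / N := by
          gcongr
          exact_mod_cast (card_filter_Ioc_le_of_mod_mem M S J hJ a N).trans_eq (by ring)
      _ ≤ (N / M * #S + 2 * #S) / N := by gcongr; exact Nat.cast_div_le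
      _ = #S / M + 2 * #S / N := by field_simp
  have hlim : Tendsto (fun N : ℕ => (#S / M : ℝ) + 2 * #S / N) atTop (𝓝 (#S / M)) := by
    simpa using tendsto_const_nhds.add (tendsto_const_div_atTop_nhds_zero_nat (2 * (#S : ℝ)))
  calc upperBanachDensity J = limsup g atTop := rfl
    _ ≤ limsup (fun N : ℕ => (#S / M : ℝ) + 2 * #S / N) atTop :=
        limsup_le_limsup (eventually_atTop.2 ⟨1, hbound⟩)
          (isCoboundedUnder_le_of_le atTop fun N => Real.iSup_nonneg fun a => by positivity)
          hlim.isBoundedUnder_le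
    _ = #S / M := hlim.limsup_eq

theorem exp_two_pi_I_div_pow_eq (M n : ℕ) :
    Complex.exp (2 * π * Complex.I / M) ^ n = Complex.exp (Complex.I * ↑(2 * π * n / M)) := by
  rw [← Complex.exp_nat_mul]; congr 1; push_cast; ring

theorem norm_exp_two_pi_I_div_sub_one_le (M : ℕ) :
    ‖Complex.exp (2 * π * Complex.I / M) - 1‖ ≤ 2 * π / M := by
  have := Real.norm_exp_I_mul_ofReal_sub_one_le (x := 2 * π * (1 : ℕ) / M)
  rwa [← exp_two_pi_I_div_pow_eq, pow_one, Real.norm_of_nonneg (by positivity), Nat.cast_one,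
    mul_one] at this

theorem four_mul_min_le_norm_exp_pow_sub_one {M r : ℕ} (hr : r ≤ M) :
    4 * (min r (M - r) : ℕ) / (M : ℝ) ≤ ‖Complex.exp (2 * π * Complex.I / M) ^ r - 1‖ := by
  rcases Nat.eq_zero_or_pos M with rfl | hM
  · simp
  have hM' : (0 : ℝ) < M := by exact_mod_cast hM
  have jordan : ∀ t : ℕ, 2 * t ≤ M → 4 * t / (M : ℝ) ≤ ‖2 * sin (π * t / M)‖ := fun t ht => by
    have ht' : (2 * t : ℝ) ≤ M := by exact_mod_cast ht
    have := mul_le_sin (x := π * t / M) (by positivity)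
      (by rw [div_le_div_iff₀ hM' two_pos]; nlinarith [pi_pos])
    refine le_trans ?_ (le_norm_self _)
    convert mul_le_mul_of_nonneg_left this zero_le_two using 1
    field_simp
    ring
  have hsymm : sin (π * ↑(M - r) / M) = sin (π * r / M) := by
    rw [Nat.cast_sub hr, ← sin_pi_sub]; congr 1; field_simp; ring
  rw [exp_two_pi_I_div_pow_eq, Complex.norm_exp_I_mul_ofReal_sub_one,
    show 2 * π * r / M / 2 = π * r / M by ring]
  rcases le_total (2 * r) M with h | h
  · rw [min_eq_left (by omega)]
    exact jordan r h
  · rw [min_eq_right (by omega), ← hsymm]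
    exact jordan (M - r) (by omega)

theorem card_filter_min_sub_le (M c : ℕ) : #{r ∈ range M | min r (M - r) ≤ c} ≤ 2 * c + 1 := by
  calc #{r ∈ range M | min r (M - r) ≤ c}
      ≤ #(range (c + 1) ∪ Ico (M - c) M) := card_le_card fun r hr => by
        simp only [mem_filter, mem_range] at hr
        simp only [mem_union, mem_range, mem_Ico]
        omega
    _ ≤ (c + 1) + c := by
        refine (card_union_le _ _).trans ?_
        rw [card_range, Nat.card_Ico]
        omega
    _ = 2 * c + 1 := by ring

theorem card_filter_norm_exp_pow_sub_one_le (M : ℕ) {η : ℝ} (hη : 0 ≤ η) :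
    (#{r ∈ range M | ‖Complex.exp (2 * π * Complex.I / M) ^ r - 1‖ ≤ η} : ℝ)
      ≤ η * M / 2 + 1 := by
  set c := ⌊η * M / 4⌋₊
  have hsub : {r ∈ range M | ‖Complex.exp (2 * π * Complex.I / M) ^ r - 1‖ ≤ η}
      ⊆ {r ∈ range M | min r (M - r) ≤ c} := fun r hr => by
    simp only [mem_filter, mem_range] at hr ⊢
    refine ⟨hr.1, Nat.le_floor ?_⟩
    have hM : (0 : ℝ) < M := by exact_mod_cast Nat.zero_lt_of_lt hr.1
    have := (four_mul_min_le_norm_exp_pow_sub_one hr.1.le).trans hr.2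
    rw [div_le_iff₀ hM] at this
    linarith
  have hc : (c : ℝ) ≤ η * M / 4 := Nat.floor_le (by positivity)
  have hcard : (#{r ∈ range M | ‖Complex.exp (2 * π * Complex.I / M) ^ r - 1‖ ≤ η} : ℝ)
      ≤ 2 * c + 1 := by
    exact_mod_cast (card_le_card hsub).trans (card_filter_min_sub_le M c)
  linarith

theorem upperBanachDensity_le_of_norm_exp_pow_sub_one_le {M : ℕ} (hM : M ≠ 0) {η : ℝ}
    (hη : 0 ≤ η) (J : Set ℕ)
    (hJ : ∀ n ∈ J, ‖Complex.exp (2 * π * Complex.I / M) ^ n - 1‖ ≤ η) :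
    upperBanachDensity J ≤ η / 2 + 1 / M := by
  have hζ := Complex.isPrimitiveRoot_exp M hM
  have hJ' : ∀ n ∈ J, n % M ∈ Finset.filter
      (fun r => ‖Complex.exp (2 * π * Complex.I / M) ^ r - 1‖ ≤ η) (Finset.range M) :=
    fun n hn => by
      have hmod := pow_mod_orderOf (Complex.exp (2 * π * Complex.I / M)) n
      rw [← hζ.eq_orderOf] at hmod
      rw [Finset.mem_filter, Finset.mem_range, hmod]
      exact ⟨Nat.mod_lt n (Nat.pos_of_ne_zero hM), hJ n hn⟩
  have hM' : (0 : ℝ) < M := by exact_mod_cast Nat.pos_of_ne_zero hM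
  calc upperBanachDensity J ≤ _ / M := upperBanachDensity_le_of_mod_mem M _ J hJ'
    _ ≤ (η * M / 2 + 1) / M := by gcongr; exact card_filter_norm_exp_pow_sub_one_le M hη
    _ = η / 2 + 1 / M := by field_simp

section Block

variable {X : Type*} {T : X → X}

theorem sub_mul_apply_iterate {R : Type*} [CommRing R] {φ ψ : X → R} {a b d : R}
    (hφ : ∀ y, φ (T y) = a * φ y + b * ψ y) (hψ : ∀ y, ψ (T y) = d * ψ y) (x : X) (n : ℕ) :
    (d - a) * φ (T^[n] x) = (d - a) * a ^ n * φ x + b * (d ^ n - a ^ n) * ψ x := by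
  have hψn : ∀ n, ψ (T^[n] x) = d ^ n * ψ x := fun n => by
    induction n with
    | zero => simp
    | succ n ih => rw [Function.iterate_succ_apply', hψ, ih, pow_succ]; ring
  induction n with
  | zero => simp
  | succ n ih =>
    rw [Function.iterate_succ_apply', hφ, hψn]
    linear_combination a * ih

theorem norm_pow_sub_one_mul_le {𝕜 : Type*} [NormedField 𝕜] {φ ψ : X → 𝕜} {a b : 𝕜}
    (ha : ‖a‖ = 1) (hφ : ∀ y, φ (T y) = a * φ y + b * ψ y) (hψ : ∀ y, ψ (T y) = a ^ 2 * ψ y)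
    (x : X) (n : ℕ) :
    ‖a ^ n - 1‖ * (‖b‖ * ‖ψ x‖ - ‖a - 1‖ * ‖φ x‖) ≤ ‖a - 1‖ * ‖φ (T^[n] x) - φ x‖ := by
  -- for `d = a²` the factor `(a²ⁿ - aⁿ) / (a² - a) = aⁿ⁻¹ (aⁿ - 1) / (a - 1)` contains `aⁿ - 1`
  have key : a * (a - 1) * (φ (T^[n] x) - φ x)
      = (a ^ n - 1) * (b * a ^ n * ψ x + a * (a - 1) * φ x) := by
    linear_combination sub_mul_apply_iterate hφ hψ x n
  have hnorm := congrArg norm key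
  simp only [norm_mul, ha, one_mul] at hnorm
  rw [hnorm]
  gcongr
  calc ‖b‖ * ‖ψ x‖ - ‖a - 1‖ * ‖φ x‖
      = ‖b * a ^ n * ψ x‖ - ‖a * (a - 1) * φ x‖ := by
        simp only [norm_mul, norm_pow, ha, one_pow, one_mul, mul_one]
    _ ≤ ‖b * a ^ n * ψ x + a * (a - 1) * φ x‖ := norm_sub_le_norm_add _ _

end Block

theorem isNowhereDense_setOf_forall_mul_norm_le {𝕜 E ι : Type*} [RCLike 𝕜]
    [NormedAddCommGroup E] [NormedSpace 𝕜 E] (ψ : ι → E →L[𝕜] 𝕜) (v : ι → E)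
    (hψv : ∀ j, ψ j (v j) = 1) (hv : ∀ j, ‖v j‖ ≤ 1) {c : ι → ℝ} (hc0 : ∀ j, 0 ≤ c j)
    (hc : ¬BddAbove (Set.range c)) (A : ℝ) :
    IsNowhereDense {x | ∀ j, c j * ‖ψ j x‖ ≤ A} := by
  have hclosed : IsClosed {x : E | ∀ j, c j * ‖ψ j x‖ ≤ A} := by
    simp only [Set.ofPred_forall]
    exact isClosed_iInter fun j => isClosed_le (by fun_prop) continuous_const
  rw [hclosed.isNowhereDense_iff, Set.eq_empty_iff_forall_notMem]
  intro x hx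
  obtain ⟨r, hr, hball⟩ := Metric.mem_nhds_iff.1 (mem_interior_iff_mem_nhds.1 hx)
  -- both `x` and `x + (r/2) v j` lie in the set, and their `ψ j`-coordinates differ by `r/2`
  refine hc ⟨4 * A / r, Set.forall_mem_range.2 fun j => ?_⟩
  have hy : x + ((r / 2 : ℝ) : 𝕜) • v j ∈ Metric.ball x r := by
    rw [Metric.mem_ball, dist_self_add_left, norm_smul, RCLike.norm_ofReal,
      abs_of_pos (half_pos hr)]
    nlinarith [hv j, norm_nonneg (v j)]
  have hxy : r / 2 ≤ ‖ψ j (x + ((r / 2 : ℝ) : 𝕜) • v j)‖ + ‖ψ j x‖ := by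
    rw [map_add, map_smul, hψv, smul_eq_mul, mul_one]
    calc r / 2 = ‖((r / 2 : ℝ) : 𝕜)‖ := by rw [RCLike.norm_ofReal, abs_of_pos (half_pos hr)]
      _ ≤ ‖ψ j x + ((r / 2 : ℝ) : 𝕜)‖ + ‖ψ j x‖ := by
        rw [add_comm (ψ j x)]
        exact norm_le_add_norm_add _ _
  have h1 := hball hy j
  have h2 := hball (Metric.mem_ball_self hr) j
  rw [le_div_iff₀ hr]
  nlinarith [hc0 j]

theorem upperBanachDensity_returns_le {X : Type*} [NormedAddCommGroup X] [NormedSpace ℂ X]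
    {T : X →L[ℂ] X} {φ ψ : X →L[ℂ] ℂ} {M : ℕ} (hM : M ≠ 0) {b : ℂ} {K : ℝ} (hK : ‖φ‖ ≤ K)
    (hφ : ∀ y, φ (T y) = Complex.exp (2 * π * Complex.I / M) * φ y + b * ψ y)
    (hψ : ∀ y, ψ (T y) = Complex.exp (2 * π * Complex.I / M) ^ 2 * ψ y)
    {x : X} (hx : 2 * π * K * ‖x‖ < M * ‖b‖ * ‖ψ x‖) :
    upperBanachDensity {n | 1 ≤ n ∧ (T ^ n) x ∈ Metric.ball x 1}
      ≤ π * K / (M * ‖b‖ * ‖ψ x‖ - 2 * π * K * ‖x‖) + 1 / M := by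
  set ζ := Complex.exp (2 * π * Complex.I / M)
  set W := M * ‖b‖ * ‖ψ x‖ - 2 * π * K * ‖x‖
  have hW : 0 < W := sub_pos.2 hx
  have hM' : (0 : ℝ) < M := by exact_mod_cast Nat.pos_of_ne_zero hM
  have hK0 : 0 ≤ K := (norm_nonneg φ).trans hK
  have hζ : ‖ζ‖ = 1 := by
    rw [← pow_one ζ, exp_two_pi_I_div_pow_eq, Complex.norm_exp_I_mul_ofReal]
  have hζ1 := norm_exp_two_pi_I_div_sub_one_le M
  have hφx : ‖φ x‖ ≤ K * ‖x‖ := φ.le_of_opNorm_le hK x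
  refine (upperBanachDensity_le_of_norm_exp_pow_sub_one_le hM (η := 2 * π * K / W)
    (by positivity) _ fun n hn => ?_).trans_eq (by ring)
  have hret : ‖φ (T^[n] x) - φ x‖ ≤ K := by
    rw [← map_sub, ← FunLike.coe_pow_eq_iterate]
    calc ‖φ ((T ^ n) x - x)‖ ≤ K * ‖(T ^ n) x - x‖ := φ.le_of_opNorm_le hK _
      _ ≤ K * 1 := by
        gcongr
        exact (mem_ball_iff_norm.1 hn.2).le
      _ = K := mul_one K
  have hblock := norm_pow_sub_one_mul_le hζ hφ hψ x n
  set u := ‖ζ ^ n - 1‖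
  have hdecay : u * (‖b‖ * ‖ψ x‖ - 2 * π / M * (K * ‖x‖)) ≤ 2 * π / M * K :=
    calc _ ≤ u * (‖b‖ * ‖ψ x‖ - ‖ζ - 1‖ * ‖φ x‖) := by gcongr
      _ ≤ ‖ζ - 1‖ * ‖φ (T^[n] x) - φ x‖ := hblock
      _ ≤ 2 * π / M * K := by gcongr
  rw [le_div_iff₀ hW]
  calc u * W = M * (u * (‖b‖ * ‖ψ x‖ - 2 * π / M * (K * ‖x‖))) := by
        simp only [W]; field_simp
    _ ≤ M * (2 * π / M * K) := by gcongr
    _ = 2 * π * K := by field_simp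

theorem bddAbove_of_upperBanachDensity_returns_pos {X : Type*} [NormedAddCommGroup X]
    [NormedSpace ℂ X] {T : X →L[ℂ] X} {φ ψ : ℕ → X →L[ℂ] ℂ} {M : ℕ → ℕ}
    (hM : Tendsto M atTop atTop) {b : ℕ → ℂ} {K : ℝ} (hK : ∀ j, ‖φ j‖ ≤ K)
    (hφ : ∀ j y, φ j (T y) = Complex.exp (2 * π * Complex.I / M j) * φ j y + b j * ψ j y)
    (hψ : ∀ j y, ψ j (T y) = Complex.exp (2 * π * Complex.I / M j) ^ 2 * ψ j y) {x : X}
    (hx : 0 < upperBanachDensity {n | 1 ≤ n ∧ (T ^ n) x ∈ Metric.ball x 1}) :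
    BddAbove (Set.range fun j => (M j : ℝ) * ‖b j‖ * ‖ψ j x‖) := by
  set V := fun j => (M j : ℝ) * ‖b j‖ * ‖ψ j x‖
  by_contra hV
  have hfreq : ∀ C : ℕ, ∃ᶠ j in atTop, (C : ℝ) < V j := fun C => by
    by_contra h
    exact hV (isBoundedUnder_of_eventually_le
      ((not_frequently.1 h).mono fun _ => le_of_not_gt)).bddAbove_range
  obtain ⟨s, hs, hVs⟩ := extraction_forall_of_frequently hfreq
  have hVs' : Tendsto (V ∘ s) atTop atTop :=
    tendsto_atTop_mono (fun n => (hVs n).le) tendsto_natCast_atTop_atTop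
  have hMs : Tendsto (fun n => (M (s n) : ℝ)) atTop atTop :=
    tendsto_natCast_atTop_atTop.comp (hM.comp hs.tendsto_atTop)
  have hbound : Tendsto (fun n => π * K / (V (s n) - 2 * π * K * ‖x‖) + 1 / M (s n))
      atTop (𝓝 0) := by
    simpa only [add_zero, sub_eq_add_neg, Function.comp_apply] using
      (tendsto_const_nhds.div_atTop (tendsto_atTop_add_const_right _ _ hVs')).add
        (tendsto_const_nhds.div_atTop hMs)
  refine hx.not_ge (ge_of_tendsto hbound ?_)
  filter_upwards [hVs'.eventually_gt_atTop (2 * π * K * ‖x‖), hMs.eventually_gt_atTop 0]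
    with n h1 h2
  exact upperBanachDensity_returns_le (by exact_mod_cast h2.ne') (hK _) (hφ _) (hψ _) h1

theorem tendsto_atTop_of_one_div_tendsto_zero {α : Type*} {l : Filter α} {g : α → ℝ}
    (hg : ∀ i, 0 < g i) (h : Tendsto (fun i => 1 / g i) l (𝓝 0)) : Tendsto g l atTop :=
  (tendsto_nhdsWithin_iff.2 ⟨h, .of_forall fun i => one_div_pos.2 (hg i)⟩).inv_tendsto_nhdsGT_zero
    |>.congr fun i => by rw [Pi.inv_apply, one_div, inv_inv]

-- Indices start at `0`: the pair `(e_{2j-1}, e_{2j})` of the paper, `j ≥ 1`, is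
-- `(e (2 * j), e (2 * j + 1))` here.
theorem stmt_15_general (X : Type*) [NormedAddCommGroup X] [NormedSpace ℂ X]
    (e : ℕ → X) (f : ℕ → X →L[ℂ] ℂ)
    (hbi : ∀ k j, f k (e j) = if k = j then 1 else 0)
    (hnorm : ∀ k, ‖e k‖ = 1)
    (hbdd : ∃ K : ℝ, ∀ k, ‖f k‖ ≤ K)
    (m : ℕ → ℕ) (hm : ∀ j, j + 1 < m j)
    (ω : ℕ → ℂ) (hω : ∀ j, ω j ≠ 0)
    (hlim : Tendsto (fun j => 1 / ((m j : ℝ) * ‖ω j‖)) atTop (𝓝 0))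
    (T : X →L[ℂ] X)
    (hT1 : ∀ (x : X) (j : ℕ), f (2 * j) (T x) =
      Complex.exp (2 * (Real.pi : ℂ) * Complex.I / (m j : ℂ) ^ 2) * f (2 * j) x
        + ω j * f (2 * j + 1) x)
    (hT2 : ∀ (x : X) (j : ℕ), f (2 * j + 1) (T x) =
      Complex.exp (2 * (Real.pi : ℂ) * Complex.I * 2 / (m j : ℂ) ^ 2) * f (2 * j + 1) x) :
    IsMeagre {x : X | ∀ U ∈ 𝓝 x,
      0 < upperBanachDensity {n : ℕ | 1 ≤ n ∧ (T ^ n) x ∈ U}} := by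
  obtain ⟨K, hK⟩ := hbdd
  set M : ℕ → ℕ := fun j => m j ^ 2
  have hmM : ∀ j, m j ≤ M j := fun j => Nat.le_self_pow two_ne_zero _
  have hM : Tendsto M atTop atTop :=
    tendsto_atTop_mono (fun j => show j ≤ M j by have := hm j; have := hmM j; omega) tendsto_id
  have hc : Tendsto (fun j => (M j : ℝ) * ‖ω j‖) atTop atTop := by
    refine tendsto_atTop_mono (fun j => by gcongr; exact_mod_cast hmM j)
      (tendsto_atTop_of_one_div_tendsto_zero (fun j => mul_pos ?_ (norm_pos_iff.2 (hω j))) hlim)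
    exact_mod_cast (Nat.succ_pos j).trans (hm j)
  have hζ : ∀ j, Complex.exp (2 * (Real.pi : ℂ) * Complex.I / (m j : ℂ) ^ 2)
      = Complex.exp (2 * π * Complex.I / M j) := fun j => by simp only [M]; push_cast; rfl
  have hζ2 : ∀ j, Complex.exp (2 * (Real.pi : ℂ) * Complex.I * 2 / (m j : ℂ) ^ 2)
      = Complex.exp (2 * π * Complex.I / M j) ^ 2 := fun j => by
    rw [← hζ, ← Complex.exp_nat_mul]; push_cast; ring_nf
  refine (isMeagre_iUnion fun A : ℕ => (isNowhereDense_setOf_forall_mul_norm_le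
    (fun j => f (2 * j + 1)) (fun j => e (2 * j + 1)) (fun j => by simp [hbi])
    (fun j => (hnorm _).le) (fun j => by positivity) (not_bddAbove_of_tendsto_atTop hc)
    A).isMeagre).mono fun x hx => ?_
  obtain ⟨A, hA⟩ := bddAbove_of_upperBanachDensity_returns_pos hM (fun j => hK (2 * j))
    (fun j y => by rw [hT1, hζ]) (fun j y => by rw [hT2, hζ2])
    (hx _ (Metric.ball_mem_nhds x one_pos))
  obtain ⟨A', hA'⟩ := exists_nat_ge A
  exact Set.mem_iUnion.2 ⟨A', fun j => (hA ⟨j, rfl⟩).trans hA'⟩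

/-- The operator `T = D_λ + B_ω` acting blockwise by the `2 × 2` blocks
`!![exp(2πi/mⱼ²), ωⱼ; 0, exp(4πi/mⱼ²)]` on the coordinates `(2j, 2j+1)` of a bounded
biorthogonal sequence with dense span (indices written `0`-based, so that the pair
`(e_{2j-1}, e_{2j})` of the paper, `j ≥ 1`, becomes `(e (2*j), e (2*j+1))`), where
`(mⱼ)` is strictly increasing with `mⱼ > j`, `ωⱼ ≠ 0` and `1/(mⱼ|ωⱼ|) → 0`, has a
meager set of reiteratively recurrent vectors. -/
theorem stmt_15 (X : Type*) [NormedAddCommGroup X] [NormedSpace ℂ X] [CompleteSpace X]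
    [TopologicalSpace.SeparableSpace X] (hinf : ¬ FiniteDimensional ℂ X)
    (e : ℕ → X) (f : ℕ → X →L[ℂ] ℂ)
    (hdense : Dense (Submodule.span ℂ (Set.range e) : Set X))
    (hbi : ∀ k j, f k (e j) = if k = j then 1 else 0)
    (hnorm : ∀ k, ‖e k‖ = 1)
    (hbdd : ∃ K : ℝ, ∀ k, ‖f k‖ ≤ K)
    (m : ℕ → ℕ) (hmono : StrictMono m) (hm : ∀ j, j + 1 < m j)
    (ω : ℕ → ℂ) (hω : ∀ j, ω j ≠ 0)
    (hlim : Tendsto (fun j => 1 / ((m j : ℝ) * ‖ω j‖)) atTop (𝓝 0))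
    (T : X →L[ℂ] X)
    (hT1 : ∀ (x : X) (j : ℕ), f (2 * j) (T x) =
      Complex.exp (2 * (Real.pi : ℂ) * Complex.I / (m j : ℂ) ^ 2) * f (2 * j) x
        + ω j * f (2 * j + 1) x)
    (hT2 : ∀ (x : X) (j : ℕ), f (2 * j + 1) (T x) =
      Complex.exp (2 * (Real.pi : ℂ) * Complex.I * 2 / (m j : ℂ) ^ 2) * f (2 * j + 1) x) :
    IsMeagre {x : X | ∀ U ∈ 𝓝 x,
      0 < upperBanachDensity {n : ℕ | 1 ≤ n ∧ (T ^ n) x ∈ U}} :=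
  stmt_15_general X e f hbi hnorm hbdd m hm ω hω hlim T hT1 hT2
end
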